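/- If G and H are equivalent graphs, each with m edges, then d_i(G) = d_i(H) for every i ∈ {1, …, m}; consequently R(G,p) = R(H,p) for all p ∈ (0,1). -/

import Mathlib

open Classical Finset

noncomputable section

/-- A finite multigraph: edges carry two (possibly equal) endpoints. -/
structure Multigraph where
  V : Type
  E : Type
  [fintV : Fintype V]
  [fintE : Fintype E]
  src : E → V
  tgt : E → V

attribute [instance] Multigraph.fintV Multigraph.fintE

namespace Multigraph

variable (G : Multigraph)

/-- Number of vertices. -/
def nV : ℕ := Fintype.card G.V

/-- Number of edges (with multiplicity). -/
def nE : ℕ := Fintype.card G.E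

/-- One step along an edge belonging to the edge set `S`. -/
def stepOn (S : Finset G.E) (u v : G.V) : Prop :=
  ∃ e ∈ S, (G.src e = u ∧ G.tgt e = v) ∨ (G.src e = v ∧ G.tgt e = u)

/-- The spanning subgraph with edge set `S` is connected. -/
def ConnOn (S : Finset G.E) : Prop :=
  ∀ u v : G.V, Relation.ReflTransGen (G.stepOn S) u v

/-- `G` is connected. -/
def Connected : Prop := G.ConnOn Finset.univ

/-- The edge set `F` disconnects `G` (i.e. is a disconnection). -/
def Disconnects (F : Finset G.E) : Prop := ¬ G.ConnOn (Finset.univ \ F)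

/-- `d i G`: the number of `i`-disconnections of `G`. -/
def d (i : ℕ) : ℕ :=
  ((Finset.univ : Finset (Finset G.E)).filter fun F => F.card = i ∧ G.Disconnects F).card

/-- The all-terminal reliability `R(G,p)`: each edge is independently retained with
probability `p`; this is the probability that the retained spanning subgraph is connected. -/
def rel (p : ℝ) : ℝ :=
  ∑ S : Finset G.E, if G.ConnOn S then p ^ S.card * (1 - p) ^ (G.nE - S.card) else 0

/-- `e` is a bridge. -/
def IsBridge (e : G.E) : Prop := G.Disconnects {e}

def Bridgeless : Prop := ∀ e : G.E, ¬ G.IsBridge e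

/-- The number of spanning trees of `G` (connected spanning subgraphs with `nV - 1` edges). -/
def treeCount : ℕ :=
  ((Finset.univ : Finset (Finset G.E)).filter fun S => S.card + 1 = G.nV ∧ G.ConnOn S).card

/-- The edge-connectivity: the least size of a disconnecting set of edges. -/
def edgeConnectivity : ℕ :=
  sInf {i : ℕ | ∃ F : Finset G.E, F.card = i ∧ G.Disconnects F}

/-- Degree of a vertex (a loop counts twice). -/
def deg (v : G.V) : ℕ :=
  (Finset.univ.filter fun e => G.src e = v).card +
    (Finset.univ.filter fun e => G.tgt e = v).card

/-- The edges crossing the vertex set `A`. -/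
def cutEdges (A : Finset G.V) : Finset G.E :=
  Finset.univ.filter fun e =>
    (G.src e ∈ A ∧ G.tgt e ∉ A) ∨ (G.src e ∉ A ∧ G.tgt e ∈ A)

/-- `F` is a cut: the set of edges crossing a nontrivial bipartition of the vertices. -/
def IsCut (F : Finset G.E) : Prop :=
  ∃ A : Finset G.V, A.Nonempty ∧ A ≠ Finset.univ ∧ F = G.cutEdges A

/-- `F` is a bond: a minimal cut. -/
def IsBond (F : Finset G.E) : Prop :=
  G.IsCut F ∧ ∀ F' ⊆ F, G.IsCut F' → F' = F

/-- Number of `s`-bonds of `G`. -/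
def bondCount (s : ℕ) : ℕ :=
  ((Finset.univ : Finset (Finset G.E)).filter fun F => F.card = s ∧ G.IsBond F).card

/-- Adjacency of vertices. -/
def Adj (u v : G.V) : Prop :=
  ∃ e : G.E, (G.src e = u ∧ G.tgt e = v) ∨ (G.src e = v ∧ G.tgt e = u)

/-- `G` is simple: no loops and no parallel edges. -/
def IsSimple : Prop :=
  (∀ e : G.E, G.src e ≠ G.tgt e) ∧
    ∀ e f : G.E,
      ((G.src e = G.src f ∧ G.tgt e = G.tgt f) ∨ (G.src e = G.tgt f ∧ G.tgt e = G.src f)) →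
        e = f

end Multigraph

/-- `G ∈ 𝒢_{n,m}`: connected with `n` vertices and `m` edges. -/
def memG (G : Multigraph) (n m : ℕ) : Prop :=
  G.nV = n ∧ G.nE = m ∧ G.Connected

/-- Isomorphism of multigraphs. -/
structure MGIso (G H : Multigraph) where
  vMap : G.V ≃ H.V
  eMap : G.E ≃ H.E
  ends_eq : ∀ e : G.E,
    (H.src (eMap e) = vMap (G.src e) ∧ H.tgt (eMap e) = vMap (G.tgt e)) ∨
    (H.src (eMap e) = vMap (G.tgt e) ∧ H.tgt (eMap e) = vMap (G.src e))

def IsIso (G H : Multigraph) : Prop := Nonempty (MGIso G H)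

/-- `G` is `p`-optimal in `𝒢_{n,m}`. -/
def pOptimal (G : Multigraph) (n m : ℕ) (p : ℝ) : Prop :=
  memG G n m ∧ ∀ H : Multigraph, memG H n m → H.rel p ≤ G.rel p

/-- `G` is uniquely optimal in `𝒢_{n,m}`: strictly more reliable than every
non-isomorphic member, for every `p ∈ (0,1)`. -/
def UniquelyOptimal (G : Multigraph) (n m : ℕ) : Prop :=
  memG G n m ∧ ∀ H : Multigraph, memG H n m → ¬ IsIso G H →
    ∀ p : ℝ, 0 < p → p < 1 → H.rel p < G.rel p

noncomputable instance quotFintype {α : Type} [Fintype α] {r : α → α → Prop} :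
    Fintype (Quot r) :=
  letI := Classical.decEq (Quot r)
  Fintype.ofSurjective (Quot.mk r) fun q => Quot.exists_rep q

/-- Identification of the endpoints of zero-weight edges. -/
def zeroRel (D : Multigraph) (w : D.E → ℕ) : D.V → D.V → Prop :=
  fun u v => ∃ e : D.E, w e = 0 ∧ D.src e = u ∧ D.tgt e = v

/-- The `j`-th node along the chain replacing the edge `e` (whose chain has `w e` edges). -/
def chainNode (D : Multigraph) (w : D.E → ℕ) (e : D.E) (j : ℕ) :
    Quot (zeroRel D w) ⊕ (Σ f : D.E, Fin (w f - 1)) :=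
  if h : 0 < j ∧ j < w e then Sum.inr ⟨e, ⟨j - 1, by omega⟩⟩
  else if j = 0 then Sum.inl (Quot.mk _ (D.src e))
  else Sum.inl (Quot.mk _ (D.tgt e))

/-- The weak subdivision of `D` determined by the chain lengths `w`: each edge `e` is
replaced by a chain with `w e` edges; zero-weight edges are contracted. -/
def subdivide (D : Multigraph) (w : D.E → ℕ) : Multigraph where
  V := Quot (zeroRel D w) ⊕ (Σ f : D.E, Fin (w f - 1))
  E := Σ f : D.E, Fin (w f)
  src f := chainNode D w f.1 f.2.val
  tgt f := chainNode D w f.1 (f.2.val + 1)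

/-- The zero-weight edges contain no cycle (no "zero cycle"): they form a forest. -/
def ZeroAcyclic (D : Multigraph) (w : D.E → ℕ) : Prop :=
  Fintype.card (Quot (zeroRel D w)) +
      (Finset.univ.filter fun e : D.E => w e = 0).card = Fintype.card D.V

/-- `G` is a weak subdivision of `D` with chain lengths `w`. -/
def IsWeakSubdivision (G D : Multigraph) (w : D.E → ℕ) : Prop :=
  ZeroAcyclic D w ∧ IsIso G (subdivide D w)

/-- `D` is a weak distillation of `G`. -/
def IsWeakDistillation (D G : Multigraph) : Prop :=
  ∃ w : D.E → ℕ, IsWeakSubdivision G D w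

/-- The chain lengths differ pairwise by at most one. -/
def BalancedWeights {E : Type} (w : E → ℕ) : Prop := ∀ e f : E, w e ≤ w f + 1

/-- `D ∈ 𝒟_k`: connected, cubic, 3-edge-connected, of exceedance `k`. -/
def memDk (k : ℕ) (D : Multigraph) : Prop :=
  D.Connected ∧ (∀ v : D.V, D.deg v = 3) ∧
    (∀ F : Finset D.E, D.Disconnects F → 3 ≤ F.card) ∧ D.nE = D.nV + k

/-- Identification of the two endpoints of the edge `e`. -/
def contractRel (G : Multigraph) (e : G.E) : G.V → G.V → Prop :=
  fun u v => u = G.src e ∧ v = G.tgt e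

/-- Contraction of the edge `e`. -/
def Multigraph.contract (G : Multigraph) (e : G.E) : Multigraph :=
  letI := Classical.decEq G.E
  { V := Quot (contractRel G e)
    E := {f : G.E // f ≠ e}
    src := fun f => Quot.mk _ (G.src f.1)
    tgt := fun f => Quot.mk _ (G.tgt f.1) }

/-- `G'` is obtained from `G` by shifting an edge: in an intermediate graph `H`
(the expansion of `G` at a vertex by the new edge `e'`), the edges `e, e'` form a
2-bond; contracting `e'` gives back `G`, while contracting `e` gives `G'`. -/
def IsShiftOf (G G' : Multigraph) : Prop :=
  ∃ (H : Multigraph) (e e' : H.E), e ≠ e' ∧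
    H.src e ≠ H.tgt e ∧ H.src e' ≠ H.tgt e' ∧
    H.IsBond {e, e'} ∧
    IsIso (H.contract e') G ∧ IsIso (H.contract e) G'

/-- Equivalence of graphs: repeated edge shifting. -/
def EquivalentGraphs (G G' : Multigraph) : Prop :=
  Relation.ReflTransGen IsShiftOf G G'

/-- `G'` is obtained from `G` by moving the (non-loop) edge `e`: contracting `e` and
expanding a new edge, identified with `e` via `φ`, at an arbitrary vertex.
Equivalently, `G/e` and `G'/φ e` agree, compatibly with the edge identification `φ`. -/
def MovedEdge (G G' : Multigraph) (φ : G.E ≃ G'.E) (e : G.E) : Prop :=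
  G.src e ≠ G.tgt e ∧ G'.src (φ e) ≠ G'.tgt (φ e) ∧
  ∃ ψ : Quot (contractRel G e) ≃ Quot (contractRel G' (φ e)),
    ∀ f : G.E, f ≠ e →
      ((ψ (Quot.mk _ (G.src f)) = Quot.mk _ (G'.src (φ f)) ∧
        ψ (Quot.mk _ (G.tgt f)) = Quot.mk _ (G'.tgt (φ f))) ∨
       (ψ (Quot.mk _ (G.src f)) = Quot.mk _ (G'.tgt (φ f)) ∧
        ψ (Quot.mk _ (G.tgt f)) = Quot.mk _ (G'.src (φ f))))

/-- Move one edge from the chain `a` to the chain `b`. -/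
def moveWeight {E : Type} (w : E → ℕ) (a b : E) : E → ℕ :=
  fun g => if g = b then w b + 1 else if g = a then w a - 1 else w g

/-- The chains of maximal length. -/
def maxChains (D : Multigraph) (w : D.E → ℕ) : Finset D.E :=
  Finset.univ.filter fun e => ∀ f : D.E, w f ≤ w e

/-- The chains of minimal length. -/
def minChains (D : Multigraph) (w : D.E → ℕ) : Finset D.E :=
  Finset.univ.filter fun e => ∀ f : D.E, w e ≤ w f

/-- Degree of `v` within the edge set `S`. -/
def degIn (D : Multigraph) (S : Finset D.E) (v : D.V) : ℕ :=
  (S.filter fun e => D.src e = v).card + (S.filter fun e => D.tgt e = v).card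

/-- `S` is a matching (pairwise non-adjacent edges). -/
def IsMatchingIn (D : Multigraph) (S : Finset D.E) : Prop := ∀ v : D.V, degIn D S v ≤ 1

/-- `S` is a path with three edges. -/
def IsPath3In (D : Multigraph) (S : Finset D.E) : Prop :=
  S.card = 3 ∧ (∀ v : D.V, degIn D S v ≤ 2) ∧
    (Finset.univ.filter fun v : D.V => degIn D S v = 1).card = 2

/-- `S` is the disjoint union of a path with three edges and a single edge. -/
def IsPath3PlusEdgeIn (D : Multigraph) (S : Finset D.E) : Prop :=
  S.card = 4 ∧ (∀ v : D.V, degIn D S v ≤ 2) ∧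
    (Finset.univ.filter fun v : D.V => degIn D S v = 1).card = 4 ∧
    ∃ e ∈ S, degIn D S (D.src e) = 2 ∧ degIn D S (D.tgt e) = 2

/-- `S` is the disjoint union of two paths with two edges each. -/
def IsTwoPlusTwoIn (D : Multigraph) (S : Finset D.E) : Prop :=
  S.card = 4 ∧ (∀ v : D.V, degIn D S v ≤ 2) ∧
    (Finset.univ.filter fun v : D.V => degIn D S v = 1).card = 4 ∧
    ∀ e ∈ S, degIn D S (D.src e) = 1 ∨ degIn D S (D.tgt e) = 1

/-- Two edges sharing a vertex. -/
def AdjEdges (D : Multigraph) (a b : D.E) : Prop :=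
  ∃ v : D.V, (D.src a = v ∨ D.tgt a = v) ∧ (D.src b = v ∨ D.tgt b = v)

/-- The number of incidences of edges of weight `c` at the vertex `u`. -/
def incCount (D : Multigraph) (w : D.E → ℕ) (u : D.V) (c : ℕ) : ℕ :=
  (Finset.univ.filter fun e : D.E => D.src e = u ∧ w e = c).card +
    (Finset.univ.filter fun e : D.E => D.tgt e = u ∧ w e = c).card

/-- The `π^v`-value of the vertex `u`: the number of incident edges of weight `q + 1`
minus the number of incident edges of weight `q - 1`. -/
def piV (D : Multigraph) (w : D.E → ℕ) (q : ℕ) (u : D.V) : ℤ :=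
  (incCount D w u (q + 1) : ℤ) -
    (if q = 0 then 0 else (incCount D w u (q - 1) : ℤ))

/-- The `π^v`-values are balanced: pairwise differences at most one. -/
def BalancedPiV (D : Multigraph) (w : D.E → ℕ) (q : ℕ) : Prop :=
  ∀ u v : D.V, piV D w q u ≤ piV D w q v + 1

/-- The standard weight `q`, where `m = 3kq + r` with `-3k/2 < r ≤ 3k/2`. -/
def stdWeight (m k : ℕ) : ℕ := (2 * m + 3 * k - 1) / (6 * k)

/-- `w` is a balanced weighting of `D` of total size `m` (the implied weak
subdivision is the generic member of `ℬ_m(D)`). -/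
def IsBalancedWeighting (D : Multigraph) (w : D.E → ℕ) (m : ℕ) : Prop :=
  (∑ e : D.E, w e) = m ∧ BalancedWeights w ∧ ZeroAcyclic D w

/-- Every 3-bond of `D` is trivial (consists of the three edges at a single vertex). -/
def OnlyTrivialThreeBonds (D : Multigraph) : Prop :=
  ∀ F : Finset D.E, D.IsBond F → F.card = 3 →
    ∃ u : D.V, F = Finset.univ.filter fun e => D.src e = u ∨ D.tgt e = u

/-- The 3-dipole: two vertices joined by three parallel edges. -/
def dipole3 : Multigraph where
  V := Fin 2
  E := Fin 3
  src _ := 0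
  tgt _ := 1

/-- The complete graph `K₄`. -/
def K4 : Multigraph where
  V := Fin 4
  E := {p : Fin 4 × Fin 4 // p.1 < p.2}
  src p := p.1.1
  tgt p := p.1.2

/-- The complete bipartite graph `K_{3,3}`. -/
def K33 : Multigraph where
  V := Fin 3 ⊕ Fin 3
  E := Fin 3 × Fin 3
  src p := Sum.inl p.1
  tgt p := Sum.inr p.2

/-- The triangular prism `Π₃`; the edges `Sum.inr i` are the rungs. -/
def prism : Multigraph where
  V := Fin 3 × Bool
  E := (Fin 3 × Bool) ⊕ Fin 3
  src := fun e => match e with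
    | Sum.inl (i, b) => (i, b)
    | Sum.inr i => (i, false)
  tgt := fun e => match e with
    | Sum.inl (i, b) => (i + 1, b)
    | Sum.inr i => (i, true)

/-- The Wagner graph (the 4-Möbius ladder): the edges `Sum.inl i` are the rails
(the 8-cycle) and the edges `Sum.inr j` are the rungs. -/
def wagner : Multigraph where
  V := Fin 8
  E := Fin 8 ⊕ Fin 4
  src := fun e => match e with
    | Sum.inl i => i
    | Sum.inr j => ⟨j.val, by omega⟩
  tgt := fun e => match e with
    | Sum.inl i => i + 1
    | Sum.inr j => ⟨j.val + 4, by omega⟩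

/-- The Petersen graph. -/
def petersen : Multigraph where
  V := Fin 5 × Bool
  E := Fin 5 ⊕ Fin 5 ⊕ Fin 5
  src := fun e => match e with
    | Sum.inl i => (i, false)
    | Sum.inr (Sum.inl i) => (i, false)
    | Sum.inr (Sum.inr i) => (i, true)
  tgt := fun e => match e with
    | Sum.inl i => (i + 1, false)
    | Sum.inr (Sum.inl i) => (i, true)
    | Sum.inr (Sum.inr i) => (i + 2, true)


/-!
Shifting an edge preserves the cuts. If `G ≅ K/e'` and `G' ≅ K/e` where `{e, e'}` is a cut of
`K`, then the cuts of `K/e'` are the cuts of `K` avoiding `e'`, and the transposition of `e`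
and `e'` permutes the cuts of `K`: a cut containing exactly one of them is exchanged for its
symmetric difference with `{e, e'}`, which is again a cut. The induced bijection between the
edges of `G` and `G'` therefore matches their cuts. A spanning edge set is connected iff it
meets every cut, so the bijection also matches the connected spanning subgraphs, and these
determine both the disconnection counts and the reliability.
-/

theorem Finset.map_equiv_eq_univ_iff {α β : Type} [Fintype α] [Fintype β] (φ : α ≃ β)
    (A : Finset α) : A.map φ.toEmbedding = univ ↔ A = univ := by
  rw [← map_univ_equiv φ, (map_injective _).eq_iff]

namespace Multigraph

variable {G H K : Multigraph}

section Cuts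

theorem mem_cutEdges {A : Finset G.V} {f : G.E} :
    f ∈ G.cutEdges A ↔ ¬(G.src f ∈ A ↔ G.tgt f ∈ A) := by
  simp only [cutEdges, mem_filter, mem_univ, true_and]
  tauto

open scoped symmDiff in
theorem mem_cutEdges_symmDiff {A B : Finset G.V} {f : G.E} :
    f ∈ G.cutEdges (A ∆ B) ↔ ¬(f ∈ G.cutEdges A ↔ f ∈ G.cutEdges B) := by
  simp only [mem_cutEdges, mem_symmDiff]
  tauto

theorem isCut_cutEdges_of_nonempty {A : Finset G.V} (h : (G.cutEdges A).Nonempty) :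
    G.IsCut (G.cutEdges A) := by
  obtain ⟨f, hf⟩ := h
  refine ⟨A, nonempty_iff_ne_empty.2 ?_, ?_, rfl⟩ <;>
  · rintro rfl
    simp [mem_cutEdges] at hf

theorem mem_iff_of_reflTransGen_stepOn {S : Finset G.E} {A : Finset G.V}
    (hS : Disjoint S (G.cutEdges A)) {u v : G.V}
    (huv : Relation.ReflTransGen (G.stepOn S) u v) : u ∈ A ↔ v ∈ A := by
  induction huv with
  | refl => rfl
  | tail _ hstep ih =>
    obtain ⟨f, hf, hends⟩ := hstep
    have hf' : G.src f ∈ A ↔ G.tgt f ∈ A := not_not.1 (mem_cutEdges.not.1 (disjoint_left.1 hS hf))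
    rcases hends with ⟨rfl, rfl⟩ | ⟨rfl, rfl⟩
    · exact ih.trans hf'
    · exact ih.trans hf'.symm

theorem connOn_iff_forall_isCut {S : Finset G.E} :
    G.ConnOn S ↔ ∀ F, G.IsCut F → ¬Disjoint S F := by
  constructor
  · rintro hS F ⟨A, ⟨u, hu⟩, hA, rfl⟩ hdisj
    obtain ⟨v, hv⟩ : ∃ v, v ∉ A := by simpa [eq_univ_iff_forall] using hA
    exact hv ((mem_iff_of_reflTransGen_stepOn hdisj (hS u v)).1 hu)
  · intro h u v
    by_contra huv
    let A := univ.filter (Relation.ReflTransGen (G.stepOn S) u)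
    have hcut : G.IsCut (G.cutEdges A) :=
      ⟨A, ⟨u, by simp [A, Relation.ReflTransGen.refl]⟩,
        fun hA => huv (mem_filter.1 (hA ▸ mem_univ v)).2, rfl⟩
    obtain ⟨f, hfS, hfA⟩ := not_disjoint_iff.1 (h _ hcut)
    refine mem_cutEdges.1 hfA ⟨fun hs => ?_, fun ht => ?_⟩
    · simpa [A] using (mem_filter.1 hs).2.tail ⟨f, hfS, Or.inl ⟨rfl, rfl⟩⟩
    · simpa [A] using (mem_filter.1 ht).2.tail ⟨f, hfS, Or.inr ⟨rfl, rfl⟩⟩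

end Cuts

def CutEquivalent (G H : Multigraph) : Prop :=
  ∃ φ : G.E ≃ H.E, ∀ F : Finset G.E, G.IsCut F ↔ H.IsCut (F.map φ.toEmbedding)

namespace CutEquivalent

theorem refl (G : Multigraph) : G.CutEquivalent G :=
  ⟨Equiv.refl _, fun F => by simp⟩

theorem symm (h : G.CutEquivalent H) : H.CutEquivalent G := by
  obtain ⟨φ, hφ⟩ := h
  refine ⟨φ.symm, fun F => ?_⟩
  rw [hφ, map_map]
  simp

theorem trans (hGH : G.CutEquivalent H) (hHK : H.CutEquivalent K) : G.CutEquivalent K := by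
  obtain ⟨φ, hφ⟩ := hGH
  obtain ⟨ψ, hψ⟩ := hHK
  exact ⟨φ.trans ψ, fun F => by rw [hφ, hψ, map_map]; rfl⟩

theorem connOn_map_iff {φ : G.E ≃ H.E}
    (hφ : ∀ F : Finset G.E, G.IsCut F ↔ H.IsCut (F.map φ.toEmbedding)) (S : Finset G.E) :
    G.ConnOn S ↔ H.ConnOn (S.map φ.toEmbedding) := by
  simp only [connOn_iff_forall_isCut]
  rw [φ.finsetCongr.forall_congr_right.symm]
  simp [hφ, disjoint_map]

theorem d_eq (h : G.CutEquivalent H) (i : ℕ) : G.d i = H.d i := by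
  obtain ⟨φ, hφ⟩ := h
  refine card_equiv φ.finsetCongr fun F => ?_
  rw [mem_filter, mem_filter, Equiv.finsetCongr_apply, card_map, Disconnects, Disconnects,
    connOn_map_iff hφ, Finset.map_sdiff, map_univ_equiv]
  simp only [mem_univ, true_and]

theorem rel_eq (h : G.CutEquivalent H) (p : ℝ) : G.rel p = H.rel p := by
  obtain ⟨φ, hφ⟩ := h
  have hnE : G.nE = H.nE := Fintype.card_congr φ
  exact Fintype.sum_equiv φ.finsetCongr _ _ fun S => by simp [connOn_map_iff hφ, hnE]

end CutEquivalent

end Multigraph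

namespace MGIso

variable {G H : Multigraph}

theorem map_cutEdges (i : MGIso G H) (A : Finset G.V) :
    (G.cutEdges A).map i.eMap.toEmbedding = H.cutEdges (A.map i.vMap.toEmbedding) := by
  ext f
  obtain ⟨g, rfl⟩ := i.eMap.surjective f
  simp only [mem_map_equiv, Equiv.symm_apply_apply, Multigraph.mem_cutEdges]
  rcases i.ends_eq g with ⟨hs, ht⟩ | ⟨hs, ht⟩ <;> simp only [hs, ht, Equiv.symm_apply_apply]
  tauto

theorem cutEquivalent (i : MGIso G H) : G.CutEquivalent H := by
  refine ⟨i.eMap, fun F => ⟨?_, ?_⟩⟩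
  · rintro ⟨A, hA, hAu, rfl⟩
    exact ⟨A.map i.vMap.toEmbedding, hA.map, by rwa [Ne, map_equiv_eq_univ_iff],
      i.map_cutEdges A⟩
  · rintro ⟨B, hB, hBu, hF⟩
    refine ⟨B.map i.vMap.symm.toEmbedding, hB.map, by rwa [Ne, map_equiv_eq_univ_iff], ?_⟩
    apply map_injective i.eMap.toEmbedding
    rw [hF, i.map_cutEdges, map_map]
    simp

end MGIso

namespace Multigraph

variable {K : Multigraph}

section Contract

variable (x : K.E)

def contractVertex (v : K.V) : (K.contract x).V := Quot.mk _ v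

def contractEdge : (K.contract x).E ↪ K.E := Function.Embedding.subtype _

theorem contractVertex_surjective : Function.Surjective (contractVertex x) :=
  Quot.exists_rep

theorem contractVertex_src_eq_tgt : contractVertex x (K.src x) = contractVertex x (K.tgt x) :=
  Quot.sound ⟨rfl, rfl⟩

theorem exists_contractVertex_mem_iff {B : Finset K.V} (hx : K.src x ∈ B ↔ K.tgt x ∈ B) :
    ∃ A : Finset (K.contract x).V, ∀ v, contractVertex x v ∈ A ↔ v ∈ B :=
  ⟨univ.filter fun q : (K.contract x).V =>
      Quot.lift (· ∈ B) (fun a b ⟨ha, hb⟩ => by subst ha hb; exact propext hx) q,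
    fun v => by simp only [mem_filter, mem_univ, true_and]; rfl⟩

theorem not_mem_map_contractEdge (F : Finset (K.contract x).E) : x ∉ F.map (contractEdge x) :=
  fun h => by
    obtain ⟨f, -, hf⟩ := mem_map.1 h
    exact f.2 hf

theorem cutEdges_filter_contractVertex_mem (A : Finset (K.contract x).V) :
    K.cutEdges (univ.filter fun v => contractVertex x v ∈ A) =
      ((K.contract x).cutEdges A).map (contractEdge x) := by
  ext f
  by_cases hf : f = x
  · subst hf
    simp only [mem_cutEdges, mem_filter, mem_univ, true_and, contractVertex_src_eq_tgt,
      not_mem_map_contractEdge, not_true]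
  · obtain ⟨g, rfl⟩ : ∃ g : (K.contract x).E, contractEdge x g = f := ⟨⟨f, hf⟩, rfl⟩
    rw [mem_map' _, mem_cutEdges, mem_cutEdges]
    simp only [mem_filter, mem_univ, true_and]
    rfl

theorem isCut_contract_iff {F : Finset (K.contract x).E} :
    (K.contract x).IsCut F ↔ K.IsCut (F.map (contractEdge x)) := by
  constructor
  · rintro ⟨A, ⟨q, hq⟩, hA, rfl⟩
    obtain ⟨q', hq'⟩ : ∃ q', q' ∉ A := by simpa [eq_univ_iff_forall] using hA
    obtain ⟨v, rfl⟩ := contractVertex_surjective x q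
    obtain ⟨v', rfl⟩ := contractVertex_surjective x q'
    refine ⟨univ.filter fun v => contractVertex x v ∈ A, ⟨v, by simpa⟩,
      fun h => hq' ?_, (cutEdges_filter_contractVertex_mem x A).symm⟩
    simpa using eq_univ_iff_forall.1 h v'
  · rintro ⟨B, ⟨v, hv⟩, hBu, hF⟩
    obtain ⟨v', hv'⟩ : ∃ v', v' ∉ B := by simpa [eq_univ_iff_forall] using hBu
    have hx : K.src x ∈ B ↔ K.tgt x ∈ B := by
      have := not_mem_map_contractEdge x F
      rwa [hF, mem_cutEdges, not_not] at this
    obtain ⟨A, hA⟩ := exists_contractVertex_mem_iff x hx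
    refine ⟨A, ⟨_, (hA v).2 hv⟩, fun h => hv' ((hA v').1 (eq_univ_iff_forall.1 h _)), ?_⟩
    apply map_injective (contractEdge x)
    rw [← cutEdges_filter_contractVertex_mem, hF]
    congr
    ext
    simp [hA]

end Contract

section Swap

variable {e e' : K.E}

open scoped symmDiff in
theorem isCut_map_swap (he : K.IsCut {e, e'}) {F : Finset K.E} (hF : K.IsCut F) :
    K.IsCut (F.map (Equiv.swap e e').toEmbedding) := by
  obtain ⟨A, -, -, hA⟩ := he
  obtain ⟨B, hB, hBu, rfl⟩ := hF
  have hcutA : ∀ f, f ∈ K.cutEdges A ↔ f = e ∨ f = e' := by simp [← hA]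
  have hswap : ∀ f, Equiv.swap e e' f ∈ K.cutEdges B ↔
      (f ∈ K.cutEdges B ↔ (e ∈ K.cutEdges B ↔ e' ∈ K.cutEdges B) ∨ ¬(f = e ∨ f = e')) := by
    intro f
    rcases eq_or_ne f e with rfl | hfe
    · simp only [Equiv.swap_apply_left]; tauto
    rcases eq_or_ne f e' with rfl | hfe'
    · simp only [Equiv.swap_apply_right]; tauto
    simp only [Equiv.swap_apply_of_ne_of_ne hfe hfe', hfe, hfe', or_self, not_false_eq_true,
      or_true, iff_true]
  by_cases hsame : e ∈ K.cutEdges B ↔ e' ∈ K.cutEdges B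
  · have hmap : (K.cutEdges B).map (Equiv.swap e e').toEmbedding = K.cutEdges B := by
      ext f
      simp only [mem_map_equiv, Equiv.symm_swap, hswap, hsame, true_or, iff_true]
    rw [hmap]
    exact ⟨B, hB, hBu, rfl⟩
  · have hmap : (K.cutEdges B).map (Equiv.swap e e').toEmbedding = K.cutEdges (A ∆ B) := by
      ext f
      simp only [mem_map_equiv, Equiv.symm_swap, hswap, hsame, mem_cutEdges_symmDiff, hcutA]
      tauto
    rw [hmap]
    apply isCut_cutEdges_of_nonempty
    by_cases heB : e ∈ K.cutEdges B
    · exact ⟨e', by simp only [mem_cutEdges_symmDiff, hcutA]; tauto⟩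
    · exact ⟨e, by simp only [mem_cutEdges_symmDiff, hcutA]; tauto⟩

theorem isCut_map_swap_iff (he : K.IsCut {e, e'}) {F : Finset K.E} :
    K.IsCut (F.map (Equiv.swap e e').toEmbedding) ↔ K.IsCut F :=
  ⟨fun hF => by
    simpa only [map_map, ← Equiv.trans_toEmbedding, Equiv.swap_swap, Equiv.refl_toEmbedding,
      map_refl] using isCut_map_swap he hF, isCut_map_swap he⟩

theorem cutEquivalent_contract_of_isCut (he : K.IsCut {e, e'}) :
    (K.contract e').CutEquivalent (K.contract e) := by
  let σ : (K.contract e').E ≃ (K.contract e).E :=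
    (Equiv.swap e e').subtypeEquiv fun f => by simp [Equiv.swap_apply_eq_iff]
  refine ⟨σ, fun F => ?_⟩
  have hσ : (F.map σ.toEmbedding).map (contractEdge e) =
      (F.map (contractEdge e')).map (Equiv.swap e e').toEmbedding := by
    simp only [map_map]
    rfl
  rw [isCut_contract_iff, isCut_contract_iff, hσ, isCut_map_swap_iff he]

end Swap

end Multigraph

theorem IsShiftOf.cutEquivalent {G G' : Multigraph} (h : IsShiftOf G G') :
    G.CutEquivalent G' := by
  obtain ⟨K, e, e', -, -, -, ⟨hcut, -⟩, ⟨i⟩, ⟨i'⟩⟩ := h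
  exact (i.cutEquivalent.symm.trans (Multigraph.cutEquivalent_contract_of_isCut hcut)).trans
    i'.cutEquivalent

theorem EquivalentGraphs.cutEquivalent {G H : Multigraph} (h : EquivalentGraphs G H) :
    G.CutEquivalent H := by
  induction h with
  | refl => exact .refl G
  | tail _ hshift ih => exact ih.trans hshift.cutEquivalent

theorem equivalent_graphs_same_reliability_general (G H : Multigraph) (m : ℕ)
    (heq : EquivalentGraphs G H) :
    (∀ i : ℕ, 1 ≤ i → i ≤ m → G.d i = H.d i) ∧
    (∀ p : ℝ, 0 < p → p < 1 → G.rel p = H.rel p) :=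
  ⟨fun i _ _ => heq.cutEquivalent.d_eq i, fun p _ _ => heq.cutEquivalent.rel_eq p⟩

/-- equivalent graphs (related by repeated edge shifting) have the same
numbers of i-disconnections for all 1 ≤ i ≤ m, hence the same reliability function. -/
theorem equivalent_graphs_same_reliability (G H : Multigraph) (m : ℕ)
    (hGm : G.nE = m) (hHm : H.nE = m) (heq : EquivalentGraphs G H) :
    (∀ i : ℕ, 1 ≤ i → i ≤ m → G.d i = H.d i) ∧
    (∀ p : ℝ, 0 < p → p < 1 → G.rel p = H.rel p) :=
  equivalent_graphs_same_reliability_general G H m heq
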